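/- Let Φ assign to each q in the Banach space C([0,2π],ℝ) its fundamental matrix Φ_q. The map C([0,2π],ℝ) → M₂(ℝ), q ↦ Φ_q(2π), is infinitely Fréchet differentiable, and its Fréchet derivative at q is the continuous linear map w ↦ Φ_q(2π)·∫₀^{2π} w(t)·Φ_q(t)⁻¹·N₀·Φ_q(t) dt. -/

import Mathlib

/-!
For potentials `q, q'` the product `adj Φ_q · Φ_{q'}` has derivative
`(q' - q) • adj Φ_q · N₀ · Φ_{q'}`: the coefficient matrix `A_q = [[0,1],[q,0]]` is trace-free,
so `adj (A_q Φ_q) = adj Φ_q · adj A_q = -adj Φ_q · A_q`. Integrating from `0` (and taking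
`q' = q`, which gives `adj Φ_q · Φ_q = 1`, i.e. `adj Φ_q = Φ_q⁻¹`) yields the exact identity
`Φ_{q'} - Φ_q = D(Φ_q, Φ_{q'}) (q' - q)` in `C([0,2π], M₂)`, where
`D(u, v) w = t ↦ u t · ∫₀ᵗ w · adj u · N₀ · v` is continuous and bilinear in `(u, v)`.
A Grönwall bound makes `q ↦ Φ_q` locally bounded, so the identity first gives continuity and then
Fréchet differentiability with derivative `D(Φ_q, Φ_q)`. This derivative is a smooth function of
`Φ_q`, so bootstrapping gives `C^∞`; evaluating at `2π` gives the theorem.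
-/

open Real Set Matrix

attribute [local instance] Matrix.normedAddCommGroup Matrix.normedSpace

noncomputable section

/-- The matrix `N₀ = [[0,0],[1,0]]`. -/
def N0 : Matrix (Fin 2) (Fin 2) ℝ := !![0, 0; 1, 0]

/-- Clamping map `ℝ → [0, 2π]`; it is the identity on `[0, 2π]`. -/
def clamp (t : ℝ) : Icc (0:ℝ) (2 * π) := Set.projIcc 0 (2 * π) (by positivity) t

section General

variable {𝕜 E F : Type*} [NontriviallyNormedField 𝕜] [NormedAddCommGroup E] [NormedSpace 𝕜 E]
  [NormedAddCommGroup F] [NormedSpace 𝕜 F]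

theorem hasFDerivAt_of_sub_eq_apply {f : E → F} {T : E → E →L[𝕜] F} {x : E}
    (hT : ContinuousAt T x) (hf : ∀ y, f y - f x = T y (y - x)) :
    HasFDerivAt f (T x) x := by
  refine .of_isLittleO <| Asymptotics.isLittleO_iff.2 fun c hc => ?_
  filter_upwards [Metric.tendsto_nhds.1 hT c hc] with y hy
  rw [hf, ← _root_.sub_apply]
  exact ((T y - T x).le_opNorm _).trans (by gcongr; rw [← dist_eq_norm]; exact hy.le)

theorem contDiff_of_hasFDerivAt_comp {f : E → F} {G : F → E →L[𝕜] F}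
    (hG : ContDiff 𝕜 (⊤ : ℕ∞) G) (hf : ∀ x, HasFDerivAt f (G (f x)) x) : ContDiff 𝕜 (⊤ : ℕ∞) f := by
  have hdiff : Differentiable 𝕜 f := fun x => (hf x).differentiableAt
  have hfderiv : fderiv 𝕜 f = G ∘ f := funext fun x => (hf x).fderiv
  refine contDiff_infty.2 fun n => ?_
  induction n with
  | zero => exact contDiff_zero.2 hdiff.continuous
  | succ n ih =>
    rw [Nat.cast_succ]
    refine contDiff_succ_iff_fderiv.2 ⟨hdiff, fun h => by simp at h, ?_⟩
    rw [hfderiv]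
    exact (hG.of_le (by exact_mod_cast le_top)).comp ih

end General

namespace ContinuousLinearMap

variable {𝕜 α E F G : Type*} [NontriviallyNormedField 𝕜] [TopologicalSpace α] [CompactSpace α]
  [NormedAddCommGroup E] [NormedSpace 𝕜 E] [NormedAddCommGroup F] [NormedSpace 𝕜 F]
  [NormedAddCommGroup G] [NormedSpace 𝕜 G]

variable (α) in
def compLeftContinuous₂ (B : E →L[𝕜] F →L[𝕜] G) :
    C(α, E) →L[𝕜] C(α, F) →L[𝕜] C(α, G) :=
  LinearMap.mkContinuous₂
    (LinearMap.mk₂ 𝕜 (fun u v => ⟨fun t => B (u t) (v t), by fun_prop⟩)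
      (fun _ _ _ => by ext; simp) (fun _ _ _ => by ext; simp)
      (fun _ _ _ => by ext; simp) (fun _ _ _ => by ext; simp))
    ‖B‖ fun u v => (ContinuousMap.norm_le _ (by positivity)).2 fun t =>
      (B.le_opNorm₂ _ _).trans (by gcongr <;> exact ContinuousMap.norm_coe_le_norm _ t)

end ContinuousLinearMap

namespace ContinuousMap

variable {E : Type*} [NormedAddCommGroup E] {a b : ℝ}

theorem intervalIntegrable_IccExtend (hab : a ≤ b) (g : C(Icc a b, E)) (c d : ℝ) :
    IntervalIntegrable (IccExtend hab g) MeasureTheory.volume c d :=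
  (g.continuous.Icc_extend' (h := hab)).intervalIntegrable c d

variable [NormedSpace ℝ E]

def primitiveCLM (hab : a ≤ b) : C(Icc a b, E) →L[ℝ] C(Icc a b, E) :=
  LinearMap.mkContinuous
    { toFun := fun g => ⟨fun t => ∫ s in a..t, IccExtend hab g s,
        (intervalIntegral.continuous_primitive (intervalIntegrable_IccExtend hab g) a).comp
          continuous_subtype_val⟩
      map_add' := fun g g' => by
        ext t
        simp only [coe_mk, add_apply]
        exact intervalIntegral.integral_add (intervalIntegrable_IccExtend hab g _ _)
          (intervalIntegrable_IccExtend hab g' _ _)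
      map_smul' := fun c g => by
        ext t
        exact intervalIntegral.integral_smul c _ }
    (b - a) fun g => (norm_le _ (mul_nonneg (sub_nonneg.2 hab) (norm_nonneg g))).2 fun t => by
      refine (intervalIntegral.norm_integral_le_of_norm_le_const fun s _ =>
        g.norm_coe_le_norm _).trans ?_
      rw [mul_comm, abs_of_nonneg (sub_nonneg.2 t.2.1)]
      gcongr
      exact t.2.2

end ContinuousMap

theorem norm_le_mul_exp_of_hasDerivWithinAt_bilinear {E F : Type*}
    [NormedAddCommGroup E] [NormedSpace ℝ E] [NormedAddCommGroup F] [NormedSpace ℝ F]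
    (B : F →L[ℝ] E →L[ℝ] E) {f : ℝ → E} {A : ℝ → F} {a b C : ℝ}
    (hf : ∀ t ∈ Icc a b, HasDerivWithinAt f (B (A t) (f t)) (Icc a b) t)
    (hA : ∀ t ∈ Icc a b, ‖A t‖ ≤ C) :
    ∀ t ∈ Icc a b, ‖f t‖ ≤ ‖f a‖ * exp (‖B‖ * C * (t - a)) := by
  intro t ht
  have := norm_le_gronwallBound_of_norm_deriv_right_le (K := ‖B‖ * C) (ε := 0)
    (fun t ht => (hf t ht).continuousWithinAt)
    (fun t ht => (hf t (Ico_subset_Icc_self ht)).mono_of_mem_nhdsWithin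
      (Icc_mem_nhdsGE_of_mem ht))
    le_rfl (fun t ht => ?_) t ht
  · rwa [gronwallBound_ε0] at this
  · rw [add_zero]
    refine (B.le_opNorm₂ _ _).trans ?_
    gcongr
    exact hA t (Ico_subset_Icc_self ht)

theorem Matrix.adjugate_fin_two_eq_trace_smul_sub {R : Type*} [CommRing R]
    (A : Matrix (Fin 2) (Fin 2) R) : adjugate A = A.trace • 1 - A := by
  ext i j
  fin_cases i <;> fin_cases j <;> simp [adjugate_fin_two, trace_fin_two]

section SupNorm

namespace Matrix

variable {m n : Type*} [Fintype m] [Fintype n]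

/-- The topology of `Matrix.normedAddCommGroup` is not reducibly `instTopologicalSpaceMatrix`,
so with it `C(_, Matrix m n ℝ)` and spaces of continuous linear maps between matrix spaces get no
norm by instance search; this copy carries `instTopologicalSpaceMatrix` itself. -/
abbrev supNormedAddCommGroup : NormedAddCommGroup (Matrix m n ℝ) :=
  { Matrix.normedAddCommGroup with
    toAddCommGroup := Matrix.addCommGroup
    toMetricSpace := @MetricSpace.replaceTopology _ instTopologicalSpaceMatrix
      Matrix.normedAddCommGroup.toMetricSpace rfl }

abbrev supNormedSpace :
    @NormedSpace ℝ (Matrix m n ℝ) _ Matrix.supNormedAddCommGroup.toSeminormedAddCommGroup :=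
  { Matrix.module with norm_smul_le := Matrix.normedSpace.norm_smul_le }

end Matrix

attribute [local instance high] Matrix.supNormedAddCommGroup Matrix.supNormedSpace

namespace Matrix

variable {n : Type*} [Fintype n] [DecidableEq n]

def mulCLM : Matrix n n ℝ →L[ℝ] Matrix n n ℝ →L[ℝ] Matrix n n ℝ :=
  (LinearMap.mul ℝ (Matrix n n ℝ)).toContinuousBilinearMap

@[simp]
theorem mulCLM_apply (A B : Matrix n n ℝ) : mulCLM A B = A * B :=
  rfl

def adjugateCLM : Matrix (Fin 2) (Fin 2) ℝ →L[ℝ] Matrix (Fin 2) (Fin 2) ℝ :=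
  LinearMap.toContinuousLinearMap
    { toFun := adjugate
      map_add' := fun A B => by
        simp only [adjugate_fin_two_eq_trace_smul_sub, trace_add, add_smul]
        abel
      map_smul' := fun c A => by
        simp only [adjugate_fin_two_eq_trace_smul_sub, trace_smul, smul_sub, smul_eq_mul,
          mul_smul, RingHom.id_apply] }

@[simp]
theorem adjugateCLM_apply (A : Matrix (Fin 2) (Fin 2) ℝ) : adjugateCLM A = adjugate A :=
  rfl

theorem adjugate_mul_eq_add_integral {f g A B : ℝ → Matrix (Fin 2) (Fin 2) ℝ} {a b T : ℝ}
    (hf : ∀ t ∈ Icc a b, HasDerivWithinAt f (A t * f t) (Icc a b) t)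
    (hg : ∀ t ∈ Icc a b, HasDerivWithinAt g (B t * g t) (Icc a b) t)
    (hA : ∀ t ∈ Icc a b, (A t).trace = 0)
    (hAc : ContinuousOn A (Icc a b)) (hBc : ContinuousOn B (Icc a b)) (hT : T ∈ Icc a b) :
    adjugate (f T) * g T =
      adjugate (f a) * g a + ∫ s in a..T, adjugate (f s) * (B s - A s) * g s := by
  have hderiv : ∀ t ∈ Icc a b, HasDerivWithinAt (fun s => adjugate (f s) * g s)
      (adjugate (f t) * (B t - A t) * g t) (Icc a b) t := by
    intro t ht
    have hadj := adjugateCLM.hasFDerivAt.comp_hasDerivWithinAt t (hf t ht)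
    refine (mulCLM.hasDerivWithinAt_of_bilinear hadj (hg t ht)).congr_deriv ?_
    simp only [Function.comp_apply, adjugateCLM_apply, mulCLM_apply, adjugate_mul_distrib,
      adjugate_fin_two_eq_trace_smul_sub (A t), hA t ht, zero_smul, zero_sub]
    noncomm_ring
  have hsub : Icc a T ⊆ Icc a b := Icc_subset_Icc_right hT.2
  have hfc : ContinuousOn f (Icc a b) := fun t ht => (hf t ht).continuousWithinAt
  have hgc : ContinuousOn g (Icc a b) := fun t ht => (hg t ht).continuousWithinAt
  rw [intervalIntegral.integral_eq_sub_of_hasDerivAt_of_le hT.1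
    (fun t ht => (hderiv t (hsub ht)).continuousWithinAt.mono hsub)
    (fun t ht => (hderiv t (hsub (Ioo_subset_Icc_self ht))).hasDerivAt
      (Icc_mem_nhds ht.1 (ht.2.trans_le hT.2)))
    (ContinuousOn.intervalIntegrable ?_)]
  · abel
  · rw [uIcc_of_le hT.1]
    refine ContinuousOn.mono ?_ hsub
    exact ((adjugateCLM.continuous.comp_continuousOn hfc).mul (hBc.sub hAc)).mul hgc

end Matrix

local notation "𝓧" => C(Icc (0:ℝ) (2 * π), ℝ)
local notation "𝓨" => C(Icc (0:ℝ) (2 * π), Matrix (Fin 2) (Fin 2) ℝ)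

theorem coe_clamp_of_mem {t : ℝ} (ht : t ∈ Icc (0:ℝ) (2 * π)) : (clamp t : ℝ) = t :=
  congrArg Subtype.val (projIcc_of_mem _ ht)

def hillMatrix (q : 𝓧) (t : ℝ) : Matrix (Fin 2) (Fin 2) ℝ := !![0, 1; q (clamp t), 0]

theorem hillMatrix_eq (q : 𝓧) (t : ℝ) :
    hillMatrix q t = !![0, 1; 0, 0] + q (clamp t) • N0 := by
  ext i j
  fin_cases i <;> fin_cases j <;> simp [hillMatrix, N0]

theorem trace_hillMatrix (q : 𝓧) (t : ℝ) : (hillMatrix q t).trace = 0 := by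
  simp [hillMatrix, trace_fin_two]

theorem continuous_hillMatrix (q : 𝓧) : Continuous (hillMatrix q) := by
  simp only [funext (hillMatrix_eq q), clamp]
  fun_prop

theorem hillMatrix_sub (q q' : 𝓧) (t : ℝ) :
    hillMatrix q' t - hillMatrix q t = (q' - q) (clamp t) • N0 := by
  simp only [hillMatrix_eq, ContinuousMap.sub_apply, sub_smul]
  abel

theorem norm_hillMatrix_le (q : 𝓧) (t : ℝ) :
    ‖hillMatrix q t‖ ≤ ‖(!![0, 1; 0, 0] : Matrix (Fin 2) (Fin 2) ℝ)‖ + ‖q‖ * ‖N0‖ := by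
  rw [hillMatrix_eq]
  refine (norm_add_le _ _).trans ?_
  rw [norm_smul]
  gcongr
  exact q.norm_coe_le_norm _

def duhamelCLM (u : 𝓨) : 𝓨 →L[ℝ] 𝓧 →L[ℝ] 𝓨 :=
  ContinuousLinearMap.compL ℝ 𝓧 𝓨 𝓨
      ((mulCLM.compLeftContinuous₂ _ u).comp (ContinuousMap.primitiveCLM two_pi_pos.le)) ∘L
    ((ContinuousLinearMap.lsmul ℝ ℝ).compLeftContinuous₂ _).flip ∘L
    mulCLM.compLeftContinuous₂ _ ((mulCLM.flip N0 ∘L adjugateCLM).compLeftContinuous ℝ _ u)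

theorem duhamelCLM_apply (u v : 𝓨) (w : 𝓧) (t : Icc (0:ℝ) (2 * π)) :
    duhamelCLM u v w t =
      u t * ∫ s in (0:ℝ)..t, w (clamp s) • (adjugate (u (clamp s)) * N0 * v (clamp s)) :=
  rfl

theorem contDiff_duhamelCLM_self : ContDiff ℝ (⊤ : ℕ∞) fun u => duhamelCLM u u := by
  have hmul : ContDiff ℝ (⊤ : ℕ∞) fun u : 𝓨 => mulCLM.compLeftContinuous₂ _ u :=
    ContinuousLinearMap.contDiff _
  have hadj : ContDiff ℝ (⊤ : ℕ∞) fun u : 𝓨 =>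
      (mulCLM.flip N0 ∘L adjugateCLM).compLeftContinuous ℝ (Icc (0:ℝ) (2 * π)) u :=
    ContinuousLinearMap.contDiff _
  have hsmul : ContDiff ℝ (⊤ : ℕ∞) fun v : 𝓨 =>
      ((ContinuousLinearMap.lsmul ℝ ℝ).compLeftContinuous₂ (Icc (0:ℝ) (2 * π))).flip v :=
    ContinuousLinearMap.contDiff _
  exact (hmul.clm_comp contDiff_const).clm_comp
    (hsmul.comp ((hmul.comp hadj).clm_apply contDiff_id))

structure IsFundamentalMatrix (q : 𝓧) (f : ℝ → Matrix (Fin 2) (Fin 2) ℝ) : Prop where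
  apply_zero : f 0 = 1
  hasDerivWithinAt :
    ∀ t ∈ Icc (0:ℝ) (2 * π), HasDerivWithinAt f (hillMatrix q t * f t) (Icc 0 (2 * π)) t

namespace IsFundamentalMatrix

variable {q q' : 𝓧} {f g : ℝ → Matrix (Fin 2) (Fin 2) ℝ}

theorem continuousOn (hf : IsFundamentalMatrix q f) : ContinuousOn f (Icc 0 (2 * π)) :=
  fun t ht => (hf.hasDerivWithinAt t ht).continuousWithinAt

def toContinuousMap (hf : IsFundamentalMatrix q f) : 𝓨 :=
  ⟨(Icc 0 (2 * π)).domRestrict f, hf.continuousOn.domRestrict⟩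

@[simp]
theorem toContinuousMap_apply (hf : IsFundamentalMatrix q f) (t : Icc (0:ℝ) (2 * π)) :
    hf.toContinuousMap t = f t :=
  rfl

theorem adjugate_mul (hf : IsFundamentalMatrix q f) (hg : IsFundamentalMatrix q' g) {t : ℝ}
    (ht : t ∈ Icc (0:ℝ) (2 * π)) :
    adjugate (f t) * g t =
      1 + ∫ s in (0:ℝ)..t, (q' - q) (clamp s) • (adjugate (f s) * N0 * g s) := by
  have := adjugate_mul_eq_add_integral hf.hasDerivWithinAt hg.hasDerivWithinAt
    (fun s _ => trace_hillMatrix q s) (continuous_hillMatrix q).continuousOn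
    (continuous_hillMatrix q').continuousOn ht
  simpa only [hf.apply_zero, hg.apply_zero, adjugate_one, mul_one, hillMatrix_sub, mul_smul_comm,
    smul_mul_assoc] using this

theorem adjugate_mul_self (hf : IsFundamentalMatrix q f) {t : ℝ} (ht : t ∈ Icc (0:ℝ) (2 * π)) :
    adjugate (f t) * f t = 1 := by
  simpa using hf.adjugate_mul hf ht

theorem inv_eq_adjugate (hf : IsFundamentalMatrix q f) {t : ℝ} (ht : t ∈ Icc (0:ℝ) (2 * π)) :
    (f t)⁻¹ = adjugate (f t) :=
  inv_eq_left_inv (hf.adjugate_mul_self ht)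

theorem toContinuousMap_sub (hf : IsFundamentalMatrix q f) (hg : IsFundamentalMatrix q' g) :
    hg.toContinuousMap - hf.toContinuousMap =
      duhamelCLM hf.toContinuousMap hg.toContinuousMap (q' - q) := by
  ext1 t
  have ht : (t : ℝ) ∈ Icc (0:ℝ) (2 * π) := t.2
  have hint : ∫ s in (0:ℝ)..t, (q' - q) (clamp s) • (adjugate (f s) * N0 * g s) =
      ∫ s in (0:ℝ)..t, (q' - q) (clamp s) • (adjugate (f (clamp s)) * N0 * g (clamp s)) := by
    refine intervalIntegral.integral_congr fun s hs => ?_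
    rw [uIcc_of_le ht.1] at hs
    simp only [coe_clamp_of_mem ⟨hs.1, hs.2.trans ht.2⟩]
  rw [ContinuousMap.sub_apply, duhamelCLM_apply]
  simp only [toContinuousMap_apply]
  calc g t - f t = f t * (adjugate (f t) * g t - 1) := by
        rw [mul_sub, ← mul_assoc, mul_eq_one_comm.1 (hf.adjugate_mul_self ht), one_mul, mul_one]
    _ = _ := by rw [hf.adjugate_mul hg ht, add_sub_cancel_left, hint]

theorem norm_toContinuousMap_le (hf : IsFundamentalMatrix q f) :
    ‖hf.toContinuousMap‖ ≤ ‖(1 : Matrix (Fin 2) (Fin 2) ℝ)‖ *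
      exp (‖(mulCLM : Matrix (Fin 2) (Fin 2) ℝ →L[ℝ] _)‖ *
        (‖(!![0, 1; 0, 0] : Matrix (Fin 2) (Fin 2) ℝ)‖ + ‖q‖ * ‖N0‖) * (2 * π)) := by
  refine (ContinuousMap.norm_le _ (by positivity)).2 fun t => ?_
  refine (norm_le_mul_exp_of_hasDerivWithinAt_bilinear mulCLM (A := hillMatrix q)
    hf.hasDerivWithinAt (fun s _ => norm_hillMatrix_le q s) t t.2).trans ?_
  rw [sub_zero, hf.apply_zero]
  gcongr
  exact t.2.2

theorem of_entries (h0 : f 0 = 1)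
    (h : ∀ t ∈ Icc (0:ℝ) (2 * π), ∀ i j, HasDerivWithinAt (fun s => f s i j)
      ((!![0, 1; q (clamp t), 0] * f t) i j) (Icc 0 (2 * π)) t) :
    IsFundamentalMatrix q f :=
  ⟨h0, fun t ht => hasDerivWithinAt_pi.2 fun i => hasDerivWithinAt_pi.2 fun j => h t ht i j⟩

theorem duhamelCLM_apply_two_pi (hf : IsFundamentalMatrix q f) (w : 𝓧) :
    duhamelCLM hf.toContinuousMap hf.toContinuousMap w ⟨2 * π, right_mem_Icc.2 two_pi_pos.le⟩ =
      f (2 * π) * of fun i j =>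
        ∫ t in (0:ℝ)..(2 * π), w (clamp t) * (((f t)⁻¹ * N0 * f t) i j) := by
  rw [duhamelCLM_apply]
  congr 1
  ext i j
  have hint : IntervalIntegrable (fun s => w (clamp s) •
      (adjugate (hf.toContinuousMap (clamp s)) * N0 * hf.toContinuousMap (clamp s)))
      MeasureTheory.volume 0 (2 * π) := by
    refine Continuous.intervalIntegrable ?_ _ _
    unfold clamp
    fun_prop
  refine ((entryLinearMap ℝ ℝ i j).toContinuousLinearMap.intervalIntegral_comp_comm
    hint).symm.trans (intervalIntegral.integral_congr fun t ht => ?_)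
  rw [uIcc_of_le two_pi_pos.le] at ht
  simp [coe_clamp_of_mem ht, hf.inv_eq_adjugate ht]

end IsFundamentalMatrix

section Family

variable {Φ : 𝓧 → ℝ → Matrix (Fin 2) (Fin 2) ℝ}

theorem continuous_toContinuousMap (hΦ : ∀ q, IsFundamentalMatrix q (Φ q)) :
    Continuous fun q => (hΦ q).toContinuousMap := by
  refine continuous_iff_continuousAt.2 fun q => tendsto_iff_norm_sub_tendsto_zero.2 ?_
  obtain ⟨K, hK0, hK⟩ := (duhamelCLM (hΦ q).toContinuousMap).isBoundedBilinearMap.bound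
  set c := ‖(mulCLM : Matrix (Fin 2) (Fin 2) ℝ →L[ℝ] _)‖
  have hbound : ∀ q', ‖(hΦ q').toContinuousMap - (hΦ q).toContinuousMap‖ ≤
      K * (‖(1 : Matrix (Fin 2) (Fin 2) ℝ)‖ *
        exp (c * (‖(!![0, 1; 0, 0] : Matrix (Fin 2) (Fin 2) ℝ)‖ + ‖q'‖ * ‖N0‖) * (2 * π))) *
        ‖q' - q‖ := fun q' => by
    rw [(hΦ q).toContinuousMap_sub (hΦ q')]
    refine (hK _ _).trans ?_
    gcongr
    exact (hΦ q').norm_toContinuousMap_le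
  refine squeeze_zero (fun _ => norm_nonneg _) hbound ?_
  have hcont : Continuous fun q' : 𝓧 => K * (‖(1 : Matrix (Fin 2) (Fin 2) ℝ)‖ *
      exp (c * (‖(!![0, 1; 0, 0] : Matrix (Fin 2) (Fin 2) ℝ)‖ + ‖q'‖ * ‖N0‖) * (2 * π))) *
      ‖q' - q‖ := by fun_prop
  simpa using hcont.tendsto q

theorem hasFDerivAt_toContinuousMap (hΦ : ∀ q, IsFundamentalMatrix q (Φ q)) (q : 𝓧) :
    HasFDerivAt (fun q => (hΦ q).toContinuousMap)
      (duhamelCLM (hΦ q).toContinuousMap (hΦ q).toContinuousMap) q :=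
  hasFDerivAt_of_sub_eq_apply
    ((duhamelCLM _).continuous.comp (continuous_toContinuousMap hΦ)).continuousAt
    fun q' => (hΦ q).toContinuousMap_sub (hΦ q')

theorem contDiff_toContinuousMap (hΦ : ∀ q, IsFundamentalMatrix q (Φ q)) :
    ContDiff ℝ (⊤ : ℕ∞) fun q => (hΦ q).toContinuousMap :=
  contDiff_of_hasFDerivAt_comp contDiff_duhamelCLM_self (hasFDerivAt_toContinuousMap hΦ)

end Family

end SupNorm

/-- Proposition 2.1. The matrix-level monodromy map
`q ↦ Φ_q(2π)` on the Banach space `C([0,2π],ℝ)` is smooth (infinitely Fréchet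
differentiable), with Fréchet derivative at `q` the continuous linear map
`w ↦ Φ_q(2π)·∫₀^{2π} w(t)·Φ_q(t)⁻¹·N₀·Φ_q(t) dt`. -/
theorem stmt_4
    -- `Φ q` is the fundamental matrix of the potential `q`:
    (Φ : C(Icc (0:ℝ) (2 * π), ℝ) → ℝ → Matrix (Fin 2) (Fin 2) ℝ)
    (hΦ0 : ∀ q, Φ q 0 = 1)
    (hΦ : ∀ q, ∀ t ∈ Icc (0:ℝ) (2 * π), ∀ i j,
      HasDerivWithinAt (fun s => Φ q s i j)
        ((!![0, 1; q (clamp t), 0] * Φ q t) i j) (Icc 0 (2 * π)) t) :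
    ContDiff ℝ (⊤ : ℕ∞) (fun q : C(Icc (0:ℝ) (2 * π), ℝ) => Φ q (2 * π)) ∧
    ∀ q : C(Icc (0:ℝ) (2 * π), ℝ),
      ∃ L : C(Icc (0:ℝ) (2 * π), ℝ) →L[ℝ] Matrix (Fin 2) (Fin 2) ℝ,
        HasFDerivAt (fun q' => Φ q' (2 * π)) L q ∧
        ∀ w : C(Icc (0:ℝ) (2 * π), ℝ),
          L w = Φ q (2 * π) *
            Matrix.of (fun i j : Fin 2 =>
              ∫ t in (0:ℝ)..(2 * π), w (clamp t) * (((Φ q t)⁻¹ * N0 * Φ q t) i j)) := by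
  -- see `Matrix.supNormedAddCommGroup`
  let := Matrix.supNormedAddCommGroup (m := Fin 2) (n := Fin 2)
  let := Matrix.supNormedSpace (m := Fin 2) (n := Fin 2)
  have hfund q : IsFundamentalMatrix q (Φ q) := .of_entries (hΦ0 q) (hΦ q)
  let ev := ContinuousMap.evalCLM (M := Matrix (Fin 2) (Fin 2) ℝ) ℝ
    (⟨2 * π, right_mem_Icc.2 two_pi_pos.le⟩ : Icc (0:ℝ) (2 * π))
  refine ⟨ev.contDiff.comp (contDiff_toContinuousMap hfund), fun q =>
    ⟨ev ∘L duhamelCLM (hfund q).toContinuousMap (hfund q).toContinuousMap, ?_, ?_⟩⟩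
  · exact ev.hasFDerivAt.comp q (hasFDerivAt_toContinuousMap hfund q)
  · exact (hfund q).duhamelCLM_apply_two_pi
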